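/- If b ≥ 3 and φ: A_b → A_{b−1} is a surjective alphabetic map applied letterwise, then for every b-bi-immune sequence x ∈ A_b^ω, the image sequence φ(x) ∈ A_{b−1}^ω is (b−1)-bi-immune. -/
import Mathlib


/-- A set of naturals is bi-immune if neither it nor its complement contains an
infinite computable subset. -/
def BiImmuneSet (S : Set ℕ) : Prop :=
  (¬∃ T : Set ℕ, T ⊆ S ∧ T.Infinite ∧ ComputablePred (· ∈ T)) ∧
  (¬∃ T : Set ℕ, T ⊆ Sᶜ ∧ T.Infinite ∧ ComputablePred (· ∈ T))

/-- A sequence over the alphabet `A_b = Fin b` is `b`-bi-immune if for every letter `a`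
the support `{i | x i = a}` is bi-immune. -/
def BBiImmune {b : ℕ} (x : ℕ → Fin b) : Prop :=
  ∀ a : Fin b, BiImmuneSet {i | x i = a}

theorem alphabetic_morphism_preserves_bi_immunity (b : ℕ) (hb : 3 ≤ b)
    (φ : Fin b → Fin (b - 1)) (hφ : Function.Surjective φ)
    (x : ℕ → Fin b) (hx : BBiImmune x) :
    BBiImmune (fun i => φ (x i)) := by
  intro a
  constructor
  · rintro ⟨T, hTsub, hTinf, hTcomp⟩
    haveI : Nontrivial (Fin (b - 1)) := Fin.nontrivial_iff_two_le.mpr (by omega)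
    obtain ⟨a', ha'⟩ := exists_ne a
    obtain ⟨c, hc⟩ := hφ a'
    refine (hx c).2 ⟨T, ?_, hTinf, hTcomp⟩
    intro i hi
    have h1 : φ (x i) = a := hTsub hi
    simp only [Set.mem_compl_iff, Set.mem_setOf_eq]
    intro hxc
    exact ha' (by rw [← hc, ← hxc, h1])
  · rintro ⟨T, hTsub, hTinf, hTcomp⟩
    obtain ⟨c, hc⟩ := hφ a
    refine (hx c).2 ⟨T, ?_, hTinf, hTcomp⟩
    intro i hi
    have h1 : ¬ φ (x i) = a := hTsub hi
    simp only [Set.mem_compl_iff, Set.mem_setOf_eq]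
    intro hxc
    exact h1 (by rw [hxc, hc])
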